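/- Let (V, K, η) be a para-Hermitian vector space with fundamental form ω, and let H be a generalized metric on V (H(X,Y) = η(I X, Y) with I² = id, H an inner product) which additionally satisfies the Born compatibility ω⁻¹(H♭ X, H♭ Y) = -ω(X, Y) for all X, Y. Write H in block form with respect to V = L₊ ⊕ L₋ as in Proposition 2.8 (determined by a pair (g₊, b₊)). Then b₊ = 0; i.e., a Born structure is a generalized metric specified solely by a positive-definite metric g₊ on L₊, and H is block-diagonal: H(X, Y) = g₊(X₊, Y₊) + g₋(X₋, Y₋). -/

import Mathlib

/-!
The Born compatibility, rewritten with `I² = id` and the symmetries of `η` and `H`, says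
`ω(I X, Y) = -H(K X, Y)`. For `X ∈ L₊` and `Y ∈ L₋` this gives `η(K I X, Y) = -H(X, Y)`, while
moving `K` across `η` (which `K` anti-preserves) gives `η(K I X, Y) = H(X, Y)`. Hence `H(L₊, L₋) = 0`,
and since `H` is symmetric the decomposition `V = L₊ ⊕ L₋` is `H`-orthogonal.
-/

section Involution

variable {𝕜 V : Type*} [Field 𝕜] [AddCommGroup V] [Module 𝕜 V]
  {K : V →ₗ[𝕜] V}

lemma apply_half_add_self_of_involutive (hK : ∀ X, K (K X) = X) (X : V) :
    K ((1/2 : 𝕜) • (X + K X)) = (1/2 : 𝕜) • (X + K X) := by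
  rw [map_smul, map_add, hK, add_comm]

lemma apply_half_sub_self_of_involutive (hK : ∀ X, K (K X) = X) (X : V) :
    K ((1/2 : 𝕜) • (X - K X)) = -((1/2 : 𝕜) • (X - K X)) := by
  rw [map_smul, map_sub, hK, ← smul_neg, neg_sub]

lemma half_add_add_half_sub [NeZero (2 : 𝕜)] (X Y : V) :
    (1/2 : 𝕜) • (X + Y) + (1/2 : 𝕜) • (X - Y) = X := by
  rw [← smul_add, add_add_sub_cancel, ← two_smul 𝕜, smul_smul, one_div,
    inv_mul_cancel₀ two_ne_zero, one_smul]

lemma apply_eq_add_of_eigenspaces_orthogonal [NeZero (2 : 𝕜)] (B : LinearMap.BilinForm 𝕜 V)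
    (hK : ∀ X, K (K X) = X)
    (hpm : ∀ X Y, K X = X → K Y = -Y → B X Y = 0)
    (hmp : ∀ X Y, K X = -X → K Y = Y → B X Y = 0) (X Y : V) :
    B X Y = B ((1/2 : 𝕜) • (X + K X)) ((1/2 : 𝕜) • (Y + K Y))
      + B ((1/2 : 𝕜) • (X - K X)) ((1/2 : 𝕜) • (Y - K Y)) := by
  set Xp := (1/2 : 𝕜) • (X + K X)
  set Xm := (1/2 : 𝕜) • (X - K X)
  set Yp := (1/2 : 𝕜) • (Y + K Y)
  set Ym := (1/2 : 𝕜) • (Y - K Y)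
  have hpm' : B Xp Ym = 0 :=
    hpm _ _ (apply_half_add_self_of_involutive hK X) (apply_half_sub_self_of_involutive hK Y)
  have hmp' : B Xm Yp = 0 :=
    hmp _ _ (apply_half_sub_self_of_involutive hK X) (apply_half_add_self_of_involutive hK Y)
  calc B X Y = B (Xp + Xm) (Yp + Ym) := by rw [half_add_add_half_sub, half_add_add_half_sub]
    _ = B Xp Yp + B Xm Ym + (B Xp Ym + B Xm Yp) := by
      simp only [map_add, LinearMap.add_apply]; abel
    _ = B Xp Yp + B Xm Ym := by rw [hpm', hmp', add_zero, add_zero]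

end Involution

section Born

variable {𝕜 V : Type*} [Field 𝕜] [AddCommGroup V] [Module 𝕜 V]
  {η : V →ₗ[𝕜] V →ₗ[𝕜] 𝕜} {K I : V →ₗ[𝕜] V}

lemma eta_K_I_eq_neg_eta_I_K (hsymm : ∀ X Y, η X Y = η Y X) (hI : ∀ X, I (I X) = X)
    (hHsymm : ∀ X Y, η (I X) Y = η (I Y) X)
    (hBorn : ∀ X Y, η (K (I X)) (I Y) = - η (K X) Y) (X Y : V) :
    η (K (I X)) Y = - η (I (K X)) Y := by
  rw [← hI Y, hBorn, hI, hsymm, hHsymm]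

lemma eta_I_eq_zero_of_eigenvectors [NeZero (2 : 𝕜)] (hsymm : ∀ X Y, η X Y = η Y X)
    (hcompat : ∀ X Y, η (K X) (K Y) = - η X Y) (hI : ∀ X, I (I X) = X)
    (hHsymm : ∀ X Y, η (I X) Y = η (I Y) X)
    (hBorn : ∀ X Y, η (K (I X)) (I Y) = - η (K X) Y)
    {X Y : V} (hX : K X = X) (hY : K Y = -Y) :
    η (I X) Y = 0 := by
  have hneg : η (K (I X)) Y = - η (I X) Y := by
    rw [eta_K_I_eq_neg_eta_I_K hsymm hI hHsymm hBorn, hX]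
  have hpos : η (K (I X)) Y = η (I X) Y := by
    simpa [hY] using hcompat (I X) Y
  have htwo : (2 : 𝕜) * η (I X) Y = 0 := by linear_combination hneg - hpos
  simpa [two_ne_zero] using htwo

end Born

theorem stmt15_general (V : Type*) [AddCommGroup V] [Module ℝ V]
    (η : V →ₗ[ℝ] V →ₗ[ℝ] ℝ) (hsymm : ∀ X Y : V, η X Y = η Y X)
    (K : V →ₗ[ℝ] V) (hK : ∀ X : V, K (K X) = X)
    (hcompat : ∀ X Y : V, η (K X) (K Y) = - η X Y)
    (I : V →ₗ[ℝ] V) (hI : ∀ X : V, I (I X) = X)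
    (hHsymm : ∀ X Y : V, η (I X) Y = η (I Y) X)
    (hBorn : ∀ X Y : V, η (K (I X)) (I Y) = - η (K X) Y) :
    (∀ X Y : V, K X = X → K Y = -Y → η (I X) Y = 0) ∧
    (∀ X Y : V, η (I X) Y
      = η (I ((1/2 : ℝ) • (X + K X))) ((1/2 : ℝ) • (Y + K Y))
        + η (I ((1/2 : ℝ) • (X - K X))) ((1/2 : ℝ) • (Y - K Y))) := by
  have cross : ∀ X Y : V, K X = X → K Y = -Y → η (I X) Y = 0 := fun _ _ hX hY =>
    eta_I_eq_zero_of_eigenvectors hsymm hcompat hI hHsymm hBorn hX hY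
  refine ⟨cross, apply_eq_add_of_eigenspaces_orthogonal (η ∘ₗ I) hK cross ?_⟩
  intro X Y hX hY
  exact (hHsymm X Y).trans (cross Y X hY hX)

/-- A Born structure is a generalized metric specified solely by a metric `g₊`
on `L₊`: if `H(X,Y) = η(I X, Y)` is a generalized metric (with `I² = id`, `H` a symmetric
positive-definite form) on a para-Hermitian vector space `(V, K, η)` with fundamental form
`ω(X,Y) = η(K X, Y)` which satisfies the Born compatibility
`ω⁻¹(H♭ X, H♭ Y) = -ω(X, Y)`, expressed equivalently as `ω(I X, I Y) = -ω(X, Y)`,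
then the off-diagonal block `b₊` vanishes, i.e. `H(L₊, L₋) = 0`, and `H` is block-diagonal:
`H(X,Y) = g₊(X₊,Y₊) + g₋(X₋,Y₋)` with `X± = (1/2)(X ± K X)`. -/
theorem stmt15 (V : Type*) [AddCommGroup V] [Module ℝ V] [FiniteDimensional ℝ V]
    (η : V →ₗ[ℝ] V →ₗ[ℝ] ℝ) (hsymm : ∀ X Y : V, η X Y = η Y X)
    (hnondeg : ∀ X : V, (∀ Y : V, η X Y = 0) → X = 0)
    (K : V →ₗ[ℝ] V) (hK : ∀ X : V, K (K X) = X)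
    (hcompat : ∀ X Y : V, η (K X) (K Y) = - η X Y)
    (I : V →ₗ[ℝ] V) (hI : ∀ X : V, I (I X) = X)
    (hHsymm : ∀ X Y : V, η (I X) Y = η (I Y) X)
    (hHpos : ∀ X : V, X ≠ 0 → 0 < η (I X) X)
    (hBorn : ∀ X Y : V, η (K (I X)) (I Y) = - η (K X) Y) :
    (∀ X Y : V, K X = X → K Y = -Y → η (I X) Y = 0) ∧
    (∀ X Y : V, η (I X) Y
      = η (I ((1/2 : ℝ) • (X + K X))) ((1/2 : ℝ) • (Y + K Y))
        + η (I ((1/2 : ℝ) • (X - K X))) ((1/2 : ℝ) • (Y - K Y))) :=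
  stmt15_general V η hsymm K hK hcompat I hI hHsymm hBorn
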